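/- Consider a line network of length L formed by DMCs Q_1,…,Q_L with finite input alphabet 𝒬ᵢ and output alphabet 𝒬ₒ such that ε_{Q_ℓ} ≥ ε > 0 for all ℓ. Then for every batch size M and inner block-length N, the batched-code capacity satisfies C_L(M,N) ≤ ((1 − ε^{N(2|𝒬ᵢ|^N + K)})^{⌊L/K⌋} / N) · min{ M·log|𝒜| , N·log|𝒬ₒ| }, where K = ⌈N·log₂|𝒬ᵢ|⌉. -/

import Mathlib

open scoped BigOperators

def IsDist {α : Type*} [Fintype α] (p : α → ℝ) : Prop :=
  (∀ x, 0 ≤ p x) ∧ ∑ x, p x = 1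

def IsStoch {α β : Type*} [Fintype α] [Fintype β] (W : Matrix α β ℝ) : Prop :=
  ∀ x, (∀ y, 0 ≤ W x y) ∧ ∑ y, W x y = 1

/-- Mutual information `I(p, W)` (base-2 logarithm) between the input of channel `W`,
distributed according to `p`, and the corresponding output. -/
noncomputable def mutualInfo {α β : Type*} [Fintype α] [Fintype β]
    (p : α → ℝ) (W : Matrix α β ℝ) : ℝ :=
  ∑ x, ∑ y, p x * W x y * Real.logb 2 (W x y / ∑ x', p x' * W x' y)

/-- `N`-fold memoryless extension `Q^{⊗N}` of a channel. -/
noncomputable def tensorPow {α β : Type*} [Fintype α] [Fintype β] (N : ℕ)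
    (Q : Matrix α β ℝ) : Matrix (Fin N → α) (Fin N → β) ℝ :=
  Matrix.of fun u y => ∏ i, Q (u i) (y i)

/-- `chain Q Φ n = Q 0 * Φ 0 * Q 1 * Φ 1 * ⋯ * Q n`. -/
noncomputable def chain {β γ : Type*} [Fintype β] [Fintype γ]
    (Q : ℕ → Matrix β γ ℝ) (Φ : ℕ → Matrix γ β ℝ) : ℕ → Matrix β γ ℝ
  | 0 => Q 0
  | (n+1) => chain Q Φ n * Φ n * Q (n+1)

/-- End-to-end transition matrix `W_L = F Q₁^{⊗N} Φ₁ Q₂^{⊗N} ⋯ Φ_{L-1} Q_L^{⊗N}` of a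
batched code with batch alphabet `A`, batch size `M`, inner block-length `N`,
over the line network of length `L` whose `ℓ`-th link is the DMC `Q (ℓ-1)` (0-indexed). -/
noncomputable def endToEnd {A Qi Qo : Type*} [Fintype A] [Fintype Qi] [Fintype Qo]
    (L M N : ℕ)
    (F : Matrix (Fin M → A) (Fin N → Qi) ℝ)
    (Q : ℕ → Matrix Qi Qo ℝ)
    (Φ : ℕ → Matrix (Fin N → Qo) (Fin N → Qi) ℝ) :
    Matrix (Fin M → A) (Fin N → Qo) ℝ :=
  F * chain (fun ℓ => tensorPow N (Q ℓ)) Φ (L - 1)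

/-- Shannon capacity of a DMC, as the supremum of mutual information over input
distributions. -/
noncomputable def capacity {α β : Type*} [Fintype α] [Fintype β] (W : Matrix α β ℝ) : ℝ :=
  sSup {I : ℝ | ∃ p : α → ℝ, IsDist p ∧ I = mutualInfo p W}

/-!
Fix `K` with `|𝒬ᵢ|^N ≤ 2^K`. Any two rows of `Q_ℓ^{⊗N}` share mass at least `ε^N`, and pushing
two sub-measures of equal mass `b` through such a channel leaves them a common part of mass at least
`b ε^N`. Halving the set of inputs `K` times therefore gives, for any `K` consecutive hops of the
network, one sub-measure `μ` of mass `δ = ε^{NK}` lying below every row (a Doeblin minorization).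
That segment is the mixture of the constant channel `μ/δ` (weight `δ`) with another channel
(weight `1 - δ`), and by the log-sum inequality mutual information drops by the factor `1 - δ`
across it. Peeling off `⌊L/K⌋` disjoint segments and bounding what is left by
`min (log |inputs|) (log |outputs|)` gives the bound, since `ε^{N(2|𝒬ᵢ|^N + K)} ≤ ε^{NK}`.
-/

open Finset Matrix Real

lemma IsDist.mul_le_vecMul {α β : Type*} [Fintype α] {p : α → ℝ} (hp : IsDist p)
    {W : Matrix α β ℝ} (hW : ∀ x y, 0 ≤ W x y) (x : α) (y : β) : p x * W x y ≤ (p ᵥ* W) y :=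
  single_le_sum (f := fun x => p x * W x y) (fun x _ => mul_nonneg (hp.1 x) (hW x y)) (mem_univ x)

lemma vecMul_le_vecMul {α β : Type*} [Fintype α] {W : Matrix α β ℝ} (hW : ∀ x y, 0 ≤ W x y)
    {u v : α → ℝ} (huv : u ≤ v) : u ᵥ* W ≤ v ᵥ* W := fun y =>
  sum_le_sum fun x _ => mul_le_mul_of_nonneg_right (huv x) (hW x y)

lemma vecMul_nonneg {α β : Type*} [Fintype α] {W : Matrix α β ℝ} (hW : ∀ x y, 0 ≤ W x y)
    {v : α → ℝ} (hv : 0 ≤ v) : 0 ≤ v ᵥ* W := fun y =>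
  sum_nonneg fun x _ => mul_nonneg (hv x) (hW x y)

section Stochastic

variable {α β γ : Type*} [Fintype α] [Fintype β] [Fintype γ]

lemma IsStoch.nonneg {W : Matrix α β ℝ} (hW : IsStoch W) (x : α) (y : β) : 0 ≤ W x y :=
  (hW x).1 y

lemma IsStoch.sum_eq_one {W : Matrix α β ℝ} (hW : IsStoch W) (x : α) : ∑ y, W x y = 1 :=
  (hW x).2

lemma IsStoch.le_one {W : Matrix α β ℝ} (hW : IsStoch W) (x : α) (y : β) : W x y ≤ 1 :=
  (single_le_sum (fun y _ => hW.nonneg x y) (mem_univ y)).trans_eq (hW.sum_eq_one x)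

lemma IsStoch.sum_vecMul {W : Matrix α β ℝ} (hW : IsStoch W) (v : α → ℝ) :
    ∑ y, (v ᵥ* W) y = ∑ x, v x := by
  simp only [vecMul, dotProduct]
  rw [sum_comm]
  simp [← mul_sum, hW.sum_eq_one]

lemma IsStoch.nonempty [Nonempty α] {W : Matrix α β ℝ} (hW : IsStoch W) : Nonempty β := by
  by_contra h
  have := hW.sum_eq_one (Classical.arbitrary α)
  simp_all

lemma IsStoch.mul {U : Matrix α β ℝ} {V : Matrix β γ ℝ} (hU : IsStoch U) (hV : IsStoch V) :
    IsStoch (U * V) := fun x =>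
  ⟨fun y => sum_nonneg fun z _ => mul_nonneg (hU.nonneg x z) (hV.nonneg z y), by
    rw [← hU.sum_eq_one x, ← hV.sum_vecMul]; rfl⟩

lemma isStoch_one [DecidableEq α] : IsStoch (1 : Matrix α α ℝ) := fun x =>
  ⟨fun y => by by_cases h : x = y <;> simp [one_apply, h], by simp [one_apply]⟩

lemma IsDist.nonempty {p : α → ℝ} (hp : IsDist p) : Nonempty α := by
  by_contra h
  have := hp.2
  simp_all

lemma IsDist.vecMul {p : α → ℝ} (hp : IsDist p) {W : Matrix α β ℝ} (hW : IsStoch W) :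
    IsDist (p ᵥ* W) :=
  ⟨fun y => sum_nonneg fun x _ => mul_nonneg (hp.1 x) (hW.nonneg x y), by
    rw [hW.sum_vecMul, hp.2]⟩

lemma isStoch_tensorPow (N : ℕ) {Q : Matrix α β ℝ} (hQ : IsStoch Q) :
    IsStoch (tensorPow N Q) := fun u =>
  ⟨fun y => show (0 : ℝ) ≤ ∏ i, _ from prod_nonneg fun i _ => hQ.nonneg (u i) (y i), by
    simp [tensorPow, ← Fintype.prod_sum, hQ.sum_eq_one]⟩

lemma isStoch_chain {G : ℕ → Matrix α β ℝ} {Φ : ℕ → Matrix β α ℝ} (hG : ∀ ℓ, IsStoch (G ℓ))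
    (hΦ : ∀ ℓ, IsStoch (Φ ℓ)) : ∀ n, IsStoch (chain G Φ n)
  | 0 => hG 0
  | n + 1 => ((isStoch_chain hG hΦ n).mul (hΦ n)).mul (hG (n + 1))

lemma chain_add (G : ℕ → Matrix α β ℝ) (Φ : ℕ → Matrix β α ℝ) (k : ℕ) :
    ∀ j, chain G Φ (k + 1 + j) =
      chain G Φ k * Φ k * chain (fun i => G (k + 1 + i)) (fun i => Φ (k + 1 + i)) j
  | 0 => rfl
  | j + 1 => by
    rw [← add_assoc, chain, chain_add G Φ k j, chain]
    simp only [Matrix.mul_assoc, add_assoc]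

end Stochastic

section Entropy

variable {α : Type*} [Fintype α]

lemma IsDist.neg_sum_mul_logb_le {q : α → ℝ} (hq : IsDist q) :
    -∑ x, q x * logb 2 (q x) ≤ logb 2 (Fintype.card α) := by
  have := hq.nonempty
  have hn : (0 : ℝ) < Fintype.card α := by exact_mod_cast Fintype.card_pos
  have jensen := concaveOn_negMulLog.le_map_sum (t := univ) (w := fun _ => (Fintype.card α : ℝ)⁻¹)
    (p := q) (fun _ _ => by positivity) (by simp [hn.ne']) (fun x _ => hq.1 x)
  simp only [smul_eq_mul, ← mul_sum, hq.2, mul_one, negMulLog, neg_mul, log_inv, sum_neg_distrib,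
    mul_neg, neg_neg] at jensen
  have hlog : -∑ x, q x * log (q x) ≤ log (Fintype.card α) :=
    le_of_mul_le_mul_left (by simpa only [mul_neg] using jensen) (inv_pos.2 hn)
  simpa only [logb, mul_div_assoc', ← sum_div, neg_div] using
    div_le_div_of_nonneg_right hlog (log_pos one_lt_two).le

end Entropy

section MutualInfoBounds

variable {α β : Type*} [Fintype α] [Fintype β]

lemma mul_mul_logb_div_le_of_le_one {k w q : ℝ} (hk : 0 ≤ k) (hw₀ : 0 ≤ w) (hw₁ : w ≤ 1)
    (hq : k * w ≤ q) : k * w * logb 2 (w / q) ≤ -(k * w * logb 2 q) := by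
  rcases (mul_nonneg hk hw₀).eq_or_lt with h | h
  · simp [← h]
  have hw : 0 < w := pos_of_mul_pos_right h hk
  rw [logb_div hw.ne' (h.trans_le hq).ne', mul_sub]
  linarith [mul_nonpos_of_nonneg_of_nonpos h.le (logb_nonpos one_lt_two hw₀ hw₁)]

lemma mul_mul_logb_div_le {k w q : ℝ} (hk : 0 ≤ k) (hw₀ : 0 ≤ w) (hq : k * w ≤ q) :
    k * w * logb 2 (w / q) ≤ -(k * w * logb 2 k) := by
  rcases (mul_nonneg hk hw₀).eq_or_lt with h | h
  · simp [← h]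
  have hk' : 0 < k := pos_of_mul_pos_left h hw₀
  have hq' : 0 < q := h.trans_le hq
  have hratio : logb 2 (k * w / q) ≤ 0 :=
    logb_nonpos one_lt_two (by positivity) ((div_le_one hq').2 hq)
  rw [show w / q = k * w / q / k by field_simp, logb_div (by positivity) hk'.ne', mul_sub]
  linarith [mul_nonpos_of_nonneg_of_nonpos h.le hratio]

lemma mutualInfo_le_logb_card_right {p : α → ℝ} (hp : IsDist p) {W : Matrix α β ℝ}
    (hW : IsStoch W) : mutualInfo p W ≤ logb 2 (Fintype.card β) := by
  refine le_trans ?_ (hp.vecMul hW).neg_sum_mul_logb_le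
  calc mutualInfo p W ≤ ∑ x, ∑ y, -(p x * W x y * logb 2 ((p ᵥ* W) y)) :=
        sum_le_sum fun x _ => sum_le_sum fun y _ =>
          mul_mul_logb_div_le_of_le_one (hp.1 x) (hW.nonneg x y) (hW.le_one x y)
            (hp.mul_le_vecMul hW.nonneg x y)
    _ = -∑ y, (p ᵥ* W) y * logb 2 ((p ᵥ* W) y) := by
        rw [sum_comm]
        simp only [vecMul, dotProduct, sum_mul, sum_neg_distrib]

lemma mutualInfo_le_logb_card_left {p : α → ℝ} (hp : IsDist p) {W : Matrix α β ℝ}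
    (hW : IsStoch W) : mutualInfo p W ≤ logb 2 (Fintype.card α) := by
  refine le_trans ?_ hp.neg_sum_mul_logb_le
  calc mutualInfo p W ≤ ∑ x, ∑ y, -(p x * W x y * logb 2 (p x)) :=
        sum_le_sum fun x _ => sum_le_sum fun y _ =>
          mul_mul_logb_div_le (hp.1 x) (hW.nonneg x y) (hp.mul_le_vecMul hW.nonneg x y)
    _ = -∑ x, p x * logb 2 (p x) := by
        simp only [sum_neg_distrib, ← sum_mul, ← mul_sum, hW.sum_eq_one, mul_one]

lemma mutualInfo_le_min {p : α → ℝ} (hp : IsDist p) {W : Matrix α β ℝ} (hW : IsStoch W) :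
    mutualInfo p W ≤ min (logb 2 (Fintype.card α)) (logb 2 (Fintype.card β)) :=
  le_min (mutualInfo_le_logb_card_left hp hW) (mutualInfo_le_logb_card_right hp hW)

end MutualInfoBounds

lemma mul_log_div_add_le {m u v : ℝ} (hm : 0 ≤ m) (hu : 0 ≤ u) (hv : 0 < v) :
    (m + u) * log ((m + u) / (m + v)) ≤ u * log (u / v) := by
  rcases hm.eq_or_lt with rfl | hm
  · simp
  have hmv : 0 < m + v := by positivity
  have h := convexOn_mul_log.2 (Set.mem_Ici.2 zero_le_one) (Set.mem_Ici.2 (div_nonneg hu hv.le))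
    (show 0 ≤ m / (m + v) by positivity) (show 0 ≤ v / (m + v) by positivity) (by field_simp)
  simp only [smul_eq_mul, mul_one, log_one, mul_zero, zero_add] at h
  rw [show m / (m + v) + v / (m + v) * (u / v) = (m + u) / (m + v) by field_simp] at h
  calc (m + u) * log ((m + u) / (m + v))
      = (m + v) * ((m + u) / (m + v) * log ((m + u) / (m + v))) := by
        rw [← mul_assoc, mul_div_cancel₀ _ hmv.ne']
    _ ≤ (m + v) * (v / (m + v) * (u / v * log (u / v))) := by gcongr
    _ = u * log (u / v) := by
        rw [← mul_assoc, mul_div_cancel₀ _ hmv.ne', ← mul_assoc, mul_div_cancel₀ _ hv.ne']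

lemma mul_add_mul_logb_div_le {k a b m t : ℝ} (hk : 0 ≤ k) (ha : 0 ≤ a) (hm : 0 ≤ m)
    (ht : 0 ≤ t) (hab : k * a ≤ b) :
    k * (m + t * a) * logb 2 ((m + t * a) / (m + t * b)) ≤ t * (k * a * logb 2 (a / b)) := by
  rcases hk.eq_or_lt with rfl | hk
  · simp
  rcases ha.eq_or_lt with rfl | ha
  · have hb : 0 ≤ b := by simpa using hab
    simp only [mul_zero, add_zero, zero_div, logb_zero]
    exact mul_nonpos_of_nonneg_of_nonpos (by positivity) (logb_nonpos one_lt_two (by positivity)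
      (div_le_one_of_le₀ (by nlinarith) (by positivity)))
  rcases ht.eq_or_lt with rfl | ht
  · rcases hm.eq_or_lt with rfl | hm
    · simp
    · simp [div_self hm.ne']
  have hb : 0 < b := (mul_pos hk ha).trans_le hab
  have h := mul_log_div_add_le hm (mul_nonneg ht.le ha.le) (mul_pos ht hb)
  rw [mul_div_mul_left _ _ ht.ne'] at h
  calc k * (m + t * a) * logb 2 ((m + t * a) / (m + t * b))
      = k * ((m + t * a) * log ((m + t * a) / (m + t * b))) / log 2 := by unfold logb; ring
    _ ≤ k * (t * a * log (a / b)) / log 2 := by gcongr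
    _ = t * (k * a * logb 2 (a / b)) := by unfold logb; ring

lemma IsStoch.mul_of_add_smul {α β γ : Type*} [Fintype α] [Fintype β] {U : Matrix α β ℝ}
    (hU : IsStoch U) (μ : γ → ℝ) (t : ℝ) (V : Matrix β γ ℝ) :
    U * of (fun z y => μ y + t * V z y) = of fun x y => μ y + t * (U * V) x y := by
  ext x y
  simp [mul_apply, mul_add, sum_add_distrib, ← sum_mul, hU.sum_eq_one, mul_sum, mul_left_comm]

lemma of_add_smul_mul {α β γ : Type*} [Fintype β] (μ : β → ℝ) (t : ℝ) (B : Matrix α β ℝ)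
    (R : Matrix β γ ℝ) :
    of (fun x y => μ y + t * B x y) * R = of fun x w => (μ ᵥ* R) w + t * (B * R) x w := by
  ext x w
  simp [mul_apply, vecMul, dotProduct, add_mul, sum_add_distrib, mul_sum, mul_assoc]

section Mixing

variable {α β γ δ : Type*} [Fintype α] [Fintype β] [Fintype γ] [Fintype δ]

lemma mutualInfo_add_smul_le {p : α → ℝ} (hp : IsDist p) {D : Matrix α β ℝ}
    (hD : ∀ x y, 0 ≤ D x y) {μ : β → ℝ} (hμ : 0 ≤ μ) {t : ℝ} (ht : 0 ≤ t) :
    mutualInfo p (of fun x y => μ y + t * D x y) ≤ t * mutualInfo p D := by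
  have hout : ∀ y, (p ᵥ* of fun x y => μ y + t * D x y) y = μ y + t * (p ᵥ* D) y := by
    intro y
    simp [vecMul, dotProduct, mul_add, sum_add_distrib, ← sum_mul, hp.2, mul_sum, mul_left_comm]
  show ∑ x, ∑ y, p x * _ * logb 2 (_ / (p ᵥ* _) y) ≤
    t * ∑ x, ∑ y, p x * D x y * logb 2 (D x y / (p ᵥ* D) y)
  simp only [mul_sum, hout, of_apply]
  exact sum_le_sum fun x _ => sum_le_sum fun y _ =>
    mul_add_mul_logb_div_le (hp.1 x) (hD x y) (hμ y) ht (hp.mul_le_vecMul hD x y)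

lemma IsStoch.exists_eq_add_smul {V : Matrix α β ℝ} (hV : IsStoch V) {μ : β → ℝ}
    (hμV : ∀ x, μ ≤ V x) :
    ∃ V' : Matrix α β ℝ, IsStoch V' ∧ V = of fun x y => μ y + (1 - ∑ y, μ y) * V' x y := by
  have hμ1 : ∀ x, ∑ y, μ y ≤ 1 := fun x =>
    (sum_le_sum fun y _ => hμV x y).trans_eq (hV.sum_eq_one x)
  -- at full mass every row is `μ`, and the quotient below would divide by zero
  by_cases hδ : ∑ y, μ y = 1
  · refine ⟨V, hV, ?_⟩
    ext x y
    have hrow := (sum_eq_sum_iff_of_le fun y _ => hμV x y).1 (hδ.trans (hV.sum_eq_one x).symm)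
    simp [hδ, hrow y (mem_univ y)]
  have hδ' : 1 - ∑ y, μ y ≠ 0 := sub_ne_zero.2 (Ne.symm hδ)
  refine ⟨of fun x y => (V x y - μ y) / (1 - ∑ y, μ y), fun x => ⟨fun y => ?_, ?_⟩, ?_⟩
  · exact div_nonneg (sub_nonneg.2 (hμV x y)) (sub_nonneg.2 (hμ1 x))
  · simp only [of_apply, ← sum_div, sum_sub_distrib, hV.sum_eq_one, div_self hδ']
  · ext x y
    simp only [of_apply]
    field_simp
    ring

lemma mutualInfo_mul_add_smul_mul_le {p : α → ℝ} (hp : IsDist p) {U : Matrix α β ℝ}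
    (hU : IsStoch U) {V : Matrix β γ ℝ} (hV : IsStoch V) {R : Matrix γ δ ℝ} (hR : IsStoch R)
    {μ : γ → ℝ} (hμ : 0 ≤ μ) {t : ℝ} (ht : 0 ≤ t) :
    mutualInfo p (U * of (fun z y => μ y + t * V z y) * R) ≤ t * mutualInfo p (U * V * R) := by
  rw [hU.mul_of_add_smul, of_add_smul_mul]
  exact mutualInfo_add_smul_le hp ((hU.mul hV).mul hR).nonneg (vecMul_nonneg hR.nonneg hμ) ht

end Mixing

lemma exists_subset_union_card_le {α : Type*} [DecidableEq α] {S : Finset α} {m : ℕ}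
    (hS : #S ≤ 2 * m) : ∃ T₁ T₂ : Finset α, #T₁ ≤ m ∧ #T₂ ≤ m ∧ S ⊆ T₁ ∪ T₂ := by
  obtain ⟨T, hTS, hT⟩ := exists_subset_card_eq (min_le_left #S m)
  refine ⟨T, S \ T, by omega, ?_, by simp [union_sdiff_of_subset hTS]⟩
  rw [card_sdiff_of_subset hTS]
  omega

section Minorization

variable {X Y : Type*} [Fintype X] [Fintype Y]

lemma exists_le_sum_eq_of_le_sum {ν : Y → ℝ} (hν : 0 ≤ ν) {c : ℝ} (hc : 0 ≤ c)
    (hcν : c ≤ ∑ y, ν y) : ∃ μ : Y → ℝ, 0 ≤ μ ∧ μ ≤ ν ∧ ∑ y, μ y = c := by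
  have hs : 0 ≤ ∑ y, ν y := sum_nonneg fun y _ => hν y
  refine ⟨(c / ∑ y, ν y) • ν, smul_nonneg (div_nonneg hc hs) hν,
    fun y => mul_le_of_le_one_left (hν y) (div_le_one_of_le₀ hcν hs), ?_⟩
  rcases hs.eq_or_lt with h | h
  · simp [le_antisymm (h ▸ hcν) hc]
  · simp [← mul_sum, div_mul_cancel₀ _ h.ne']

lemma le_sum_min_vecMul {G : Matrix X Y ℝ} (hG : ∀ x y, 0 ≤ G x y) {η : ℝ}
    (hη : ∀ x x', η ≤ ∑ y, min (G x y) (G x' y)) {u v : X → ℝ} (hu : 0 ≤ u) (hv : 0 ≤ v)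
    {b : ℝ} (hub : ∑ x, u x = b) (hvb : ∑ x, v x = b) :
    b * η ≤ ∑ y, min ((u ᵥ* G) y) ((v ᵥ* G) y) := by
  have hb : 0 ≤ b := hub ▸ sum_nonneg fun x _ => hu x
  rcases hb.eq_or_lt with rfl | hb
  · simpa using sum_nonneg fun y _ =>
      le_min (vecMul_nonneg hG hu y) (vecMul_nonneg hG hv y)
  have huv : ∀ x x', 0 ≤ u x * v x' := fun x x' => mul_nonneg (hu x) (hv x')
  refine le_of_mul_le_mul_left ?_ hb
  calc b * (b * η) = ∑ x, ∑ x', u x * v x' * η := by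
        simp only [← sum_mul, ← sum_mul_sum, hub, hvb]; ring
    _ ≤ ∑ x, ∑ x', u x * v x' * ∑ y, min (G x y) (G x' y) := by
        gcongr with x _ x' _
        · exact huv x x'
        · exact hη x x'
    _ = ∑ y, ∑ x, ∑ x', u x * v x' * min (G x y) (G x' y) := by
        simp only [mul_sum]
        exact (sum_comm.trans (sum_congr rfl fun _ _ => sum_comm)).symm
    _ ≤ ∑ y, b * min ((u ᵥ* G) y) ((v ᵥ* G) y) := by
        gcongr with y
        rw [mul_min_of_nonneg _ _ hb.le]
        refine le_min ((sum_le_sum fun x _ => sum_le_sum fun x' _ =>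
          mul_le_mul_of_nonneg_left (min_le_left _ _) (huv x x')).trans_eq ?_)
          ((sum_le_sum fun x _ => sum_le_sum fun x' _ =>
          mul_le_mul_of_nonneg_left (min_le_right _ _) (huv x x')).trans_eq ?_)
        · simp only [vecMul, dotProduct, ← hvb, sum_mul_sum]
          rw [sum_comm]
          exact sum_congr rfl fun _ _ => sum_congr rfl fun _ _ => by ring
        · simp only [vecMul, dotProduct, ← hub, sum_mul_sum]
          exact sum_congr rfl fun _ _ => sum_congr rfl fun _ _ => by ring
    _ = b * ∑ y, min ((u ᵥ* G) y) ((v ᵥ* G) y) := (mul_sum _ _ _).symm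

end Minorization

section Chain

variable {X Y : Type*} [Fintype X] [Fintype Y] {G : ℕ → Matrix X Y ℝ} {Φ : ℕ → Matrix Y X ℝ}

lemma exists_minorant_chain [Nonempty X] (hG : ∀ ℓ, IsStoch (G ℓ)) (hΦ : ∀ ℓ, IsStoch (Φ ℓ))
    {η : ℝ} (hη₀ : 0 ≤ η) (hη : ∀ ℓ x x', η ≤ ∑ y, min (G ℓ x y) (G ℓ x' y)) :
    ∀ (j : ℕ) (S : Finset X), #S ≤ 2 ^ (j + 1) →
      ∃ μ : Y → ℝ, 0 ≤ μ ∧ ∑ y, μ y = η ^ (j + 1) ∧ ∀ x ∈ S, μ ≤ chain G Φ j x := by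
  classical
  intro j
  induction j with
  | zero =>
    intro S hS
    obtain ⟨T₁, T₂, hT₁, hT₂, hS⟩ := exists_subset_union_card_le (m := 1) (by simpa using hS)
    obtain ⟨x₁, hx₁⟩ := card_le_one_iff_subset_singleton.1 hT₁
    obtain ⟨x₂, hx₂⟩ := card_le_one_iff_subset_singleton.1 hT₂
    obtain ⟨μ, hμ, hμν, hμη⟩ := exists_le_sum_eq_of_le_sum
      (fun y => le_min ((hG 0).nonneg x₁ y) ((hG 0).nonneg x₂ y)) hη₀ (hη 0 x₁ x₂)
    refine ⟨μ, hμ, by simpa using hμη, fun x hx => ?_⟩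
    rcases mem_union.1 (hS hx) with h | h
    · rw [subset_singleton_iff'.1 hx₁ x h]
      exact hμν.trans fun y => min_le_left _ _
    · rw [subset_singleton_iff'.1 hx₂ x h]
      exact hμν.trans fun y => min_le_right _ _
  | succ j ih =>
    intro S hS
    obtain ⟨T₁, T₂, hT₁, hT₂, hS⟩ :=
      exists_subset_union_card_le (m := 2 ^ (j + 1)) (by rw [← pow_succ']; exact hS)
    obtain ⟨μ₁, hμ₁, hμ₁η, hμ₁S⟩ := ih T₁ hT₁
    obtain ⟨μ₂, hμ₂, hμ₂η, hμ₂S⟩ := ih T₂ hT₂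
    have hpush : ∀ {μ : Y → ℝ} {x : X}, μ ≤ chain G Φ j x →
        μ ᵥ* Φ j ᵥ* G (j + 1) ≤ chain G Φ (j + 1) x := fun h =>
      vecMul_le_vecMul (hG (j + 1)).nonneg (vecMul_le_vecMul (hΦ j).nonneg h)
    have hoverlap := le_sum_min_vecMul (hG (j + 1)).nonneg (hη (j + 1))
      (vecMul_nonneg (hΦ j).nonneg hμ₁) (vecMul_nonneg (hΦ j).nonneg hμ₂)
      ((hΦ j).sum_vecMul μ₁ ▸ hμ₁η) ((hΦ j).sum_vecMul μ₂ ▸ hμ₂η)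
    obtain ⟨μ, hμ, hμν, hμη⟩ := exists_le_sum_eq_of_le_sum
      (fun y => le_min (vecMul_nonneg (hG (j + 1)).nonneg (vecMul_nonneg (hΦ j).nonneg hμ₁) y)
        (vecMul_nonneg (hG (j + 1)).nonneg (vecMul_nonneg (hΦ j).nonneg hμ₂) y))
      (by positivity) hoverlap
    refine ⟨μ, hμ, by rw [hμη, ← pow_succ], fun x hx => ?_⟩
    rcases mem_union.1 (hS hx) with h | h
    · exact (hμν.trans fun y => min_le_left _ _).trans (hpush (hμ₁S x h))
    · exact (hμν.trans fun y => min_le_right _ _).trans (hpush (hμ₂S x h))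

lemma mutualInfo_mul_chain_le [Nonempty X] {α : Type*} [Fintype α] {p : α → ℝ} (hp : IsDist p)
    (hG : ∀ ℓ, IsStoch (G ℓ)) (hΦ : ∀ ℓ, IsStoch (Φ ℓ)) {η : ℝ} (hη₀ : 0 ≤ η) (hη₁ : η ≤ 1)
    (hη : ∀ ℓ x x', η ≤ ∑ y, min (G ℓ x y) (G ℓ x' y)) {k : ℕ}
    (hcard : Fintype.card X ≤ 2 ^ (k + 1)) (s n : ℕ) (hsn : s * (k + 1) ≤ n + 1)
    {U : Matrix α X ℝ} (hU : IsStoch U) :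
    mutualInfo p (U * chain G Φ n) ≤
      (1 - η ^ (k + 1)) ^ s * min (logb 2 (Fintype.card α)) (logb 2 (Fintype.card Y)) := by
  classical
  induction s generalizing G Φ n U with
  | zero => simpa using mutualInfo_le_min hp (hU.mul (isStoch_chain hG hΦ n))
  | succ s ih =>
    obtain ⟨μ, hμ, hμη, hμV⟩ := exists_minorant_chain hG hΦ hη₀ hη k univ (by simpa using hcard)
    obtain ⟨V', hV', hV⟩ :=
      (isStoch_chain hG hΦ k).exists_eq_add_smul fun x => hμV x (mem_univ x)
    rw [hμη] at hV
    set t := 1 - η ^ (k + 1)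
    set B := min (logb 2 (Fintype.card α)) (logb 2 (Fintype.card Y))
    have ht : 0 ≤ t := sub_nonneg.2 (pow_le_one₀ hη₀ hη₁)
    rcases lt_or_ge k n with hkn | hnk
    · obtain ⟨j, rfl⟩ : ∃ j, n = k + 1 + j := ⟨n - (k + 1), by omega⟩
      rw [chain_add, hV]
      set C := chain (fun i => G (k + 1 + i)) (fun i => Φ (k + 1 + i)) j
      have hC : IsStoch C := isStoch_chain (fun i => hG (k + 1 + i)) (fun i => hΦ (k + 1 + i)) j
      calc _ = mutualInfo p (U * _ * (Φ k * C)) := by simp only [Matrix.mul_assoc]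
        _ ≤ t * mutualInfo p (U * V' * (Φ k * C)) :=
          mutualInfo_mul_add_smul_mul_le hp hU hV' ((hΦ k).mul hC) hμ ht
        _ = t * mutualInfo p (U * V' * Φ k * C) := by simp only [Matrix.mul_assoc]
        _ ≤ t * (t ^ s * B) := by
          gcongr
          exact ih (fun i => hG _) (fun i => hΦ _) (fun i => hη _) j (by nlinarith)
            ((hU.mul hV').mul (hΦ k))
        _ = t ^ (s + 1) * B := by ring
    · obtain rfl : s = 0 := by nlinarith
      obtain rfl : n = k := by omega
      rw [hV, ← Matrix.mul_one (U * _)]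
      calc _ ≤ t * mutualInfo p (U * V' * 1) :=
          mutualInfo_mul_add_smul_mul_le hp hU hV' isStoch_one hμ ht
        _ ≤ t * B := by
          gcongr
          rw [Matrix.mul_one]
          exact mutualInfo_le_min hp (hU.mul hV')
        _ = t ^ (0 + 1) * B := by ring

end Chain

lemma pow_le_sum_min_tensorPow {α β : Type*} [Fintype α] [Fintype β] {Q : Matrix α β ℝ}
    (hQ : IsStoch Q) {ε : ℝ} (hε : 0 ≤ ε) (hεQ : ∀ x x', ∃ y, ε ≤ Q x y ∧ ε ≤ Q x' y) (N : ℕ)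
    (u u' : Fin N → α) :
    ε ^ N ≤ ∑ y, min (tensorPow N Q u y) (tensorPow N Q u' y) := by
  choose f hf₁ hf₂ using hεQ
  have hprod : ∀ v : Fin N → α, (∀ i, ε ≤ Q (v i) (f (u i) (u' i))) →
      ε ^ N ≤ tensorPow N Q v fun i => f (u i) (u' i) := fun v hv =>
    (by simp : ε ^ N = ∏ _i : Fin N, ε).trans_le (prod_le_prod (fun _ _ => hε) fun i _ => hv i)
  have hT := isStoch_tensorPow N hQ
  exact (le_min (hprod u fun i => hf₁ _ _) (hprod u' fun i => hf₂ _ _)).trans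
    (single_le_sum (fun y _ => le_min (hT.nonneg u y) (hT.nonneg u' y)) (mem_univ _))

lemma pow_le_two_pow_ceil_mul_logb (n N : ℕ) : n ^ N ≤ 2 ^ ⌈(N : ℝ) * logb 2 n⌉₊ := by
  rcases Nat.eq_zero_or_pos n with rfl | hn
  · exact (pow_le_one₀ (Nat.zero_le _) zero_le_one).trans Nat.one_le_two_pow
  have h := (logb_le_iff_le_rpow one_lt_two (by positivity : (0 : ℝ) < (n : ℝ) ^ N)).1
    ((logb_pow 2 (n : ℝ) N).trans_le (Nat.le_ceil _))
  rw [rpow_natCast] at h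
  exact_mod_cast h

lemma logb_two_natCast_nonneg (n : ℕ) : 0 ≤ logb 2 n :=
  div_nonneg (log_natCast_nonneg n) (log_nonneg one_le_two)

lemma logb_card_fin_fun (β : Type*) [Fintype β] (n : ℕ) :
    logb 2 (Fintype.card (Fin n → β)) = n * logb 2 (Fintype.card β) := by
  simp [logb_pow]

lemma mutualInfo_endToEnd_le {A Qi Qo : Type*} [Fintype A] [Fintype Qi] [Fintype Qo] [Nonempty Qi]
    {L M N : ℕ} {ε : ℝ} (hε₀ : 0 ≤ ε) (hε₁ : ε ≤ 1) {Q : ℕ → Matrix Qi Qo ℝ}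
    (hQ : ∀ ℓ, IsStoch (Q ℓ)) (hεQ : ∀ (ℓ : ℕ) (x x' : Qi), ∃ y, ε ≤ Q ℓ x y ∧ ε ≤ Q ℓ x' y)
    {F : Matrix (Fin M → A) (Fin N → Qi) ℝ} (hF : IsStoch F)
    {Φ : ℕ → Matrix (Fin N → Qo) (Fin N → Qi) ℝ} (hΦ : ∀ ℓ, IsStoch (Φ ℓ))
    {p : (Fin M → A) → ℝ} (hp : IsDist p) {K : ℕ} (hK : Fintype.card Qi ^ N ≤ 2 ^ K) :
    mutualInfo p (endToEnd L M N F Q Φ) ≤ (1 - ε ^ (N * K)) ^ (L / K) *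
      min ((M : ℝ) * logb 2 (Fintype.card A)) ((N : ℝ) * logb 2 (Fintype.card Qo)) := by
  have hQN : ∀ ℓ, IsStoch (tensorPow N (Q ℓ)) := fun ℓ => isStoch_tensorPow N (hQ ℓ)
  rw [← logb_card_fin_fun A M, ← logb_card_fin_fun Qo N, endToEnd]
  rcases K with _ | k
  · simpa using mutualInfo_le_min hp (hF.mul (isStoch_chain hQN hΦ (L - 1)))
  rw [pow_mul]
  exact mutualInfo_mul_chain_le hp hQN hΦ (pow_nonneg hε₀ N) (pow_le_one₀ hε₀ hε₁)
    (fun ℓ => pow_le_sum_min_tensorPow (hQ ℓ) hε₀ (hεQ ℓ) N) (by simpa using hK) (L / (k + 1))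
    (L - 1) ((Nat.div_mul_le_self L (k + 1)).trans (by omega)) hF

theorem stmt11_general {A Qi Qo : Type} [Fintype A] [Fintype Qi] [Fintype Qo]
    (L M N : ℕ) (hN : 0 < N)
    (ε : ℝ) (hε : 0 < ε)
    (Q : ℕ → Matrix Qi Qo ℝ) (hQ : ∀ ℓ, IsStoch (Q ℓ))
    (hεQ : ∀ (ℓ : ℕ) (x x' : Qi), ∃ y, ε ≤ Q ℓ x y ∧ ε ≤ Q ℓ x' y)
    (F : Matrix (Fin M → A) (Fin N → Qi) ℝ) (hF : IsStoch F)
    (Φ : ℕ → Matrix (Fin N → Qo) (Fin N → Qi) ℝ) (hΦ : ∀ ℓ, IsStoch (Φ ℓ))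
    (p : (Fin M → A) → ℝ) (hp : IsDist p) :
    (1 / (N : ℝ)) * mutualInfo p (endToEnd L M N F Q Φ)
      ≤ ((1 - ε ^ (N * (2 * Fintype.card Qi ^ N +
              ⌈(N : ℝ) * Real.logb 2 (Fintype.card Qi)⌉₊))) ^
            (L / ⌈(N : ℝ) * Real.logb 2 (Fintype.card Qi)⌉₊) / (N : ℝ)) *
          min ((M : ℝ) * Real.logb 2 (Fintype.card A))
              ((N : ℝ) * Real.logb 2 (Fintype.card Qo)) := by
  have : Nonempty (Fin M → A) := hp.nonempty
  obtain ⟨u⟩ := hF.nonempty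
  have : Nonempty Qi := ⟨u ⟨0, hN⟩⟩
  have hε₁ : ε ≤ 1 := by
    obtain ⟨y, hy, -⟩ := hεQ 0 (u ⟨0, hN⟩) (u ⟨0, hN⟩)
    exact hy.trans ((hQ 0).le_one _ _)
  set K := ⌈(N : ℝ) * logb 2 (Fintype.card Qi)⌉₊
  have hbound := mutualInfo_endToEnd_le (L := L) hε.le hε₁ hQ hεQ hF hΦ hp
    (pow_le_two_pow_ceil_mul_logb _ N)
  have hexp : ε ^ (N * (2 * Fintype.card Qi ^ N + K)) ≤ ε ^ (N * K) :=
    pow_le_pow_of_le_one hε.le hε₁ (Nat.mul_le_mul_left N (Nat.le_add_left K _))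
  have hmin : 0 ≤ min ((M : ℝ) * logb 2 (Fintype.card A)) ((N : ℝ) * logb 2 (Fintype.card Qo)) :=
    le_min (mul_nonneg M.cast_nonneg (logb_two_natCast_nonneg _))
      (mul_nonneg N.cast_nonneg (logb_two_natCast_nonneg _))
  calc (1 / (N : ℝ)) * mutualInfo p (endToEnd L M N F Q Φ)
      ≤ 1 / N * ((1 - ε ^ (N * K)) ^ (L / K) * _) := by gcongr
    _ ≤ 1 / N * ((1 - ε ^ (N * (2 * Fintype.card Qi ^ N + K))) ^ (L / K) * _) := by
        gcongr
        exact sub_nonneg.2 (pow_le_one₀ hε.le hε₁)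
    _ = _ := by ring

/-- Consider a line network of length `L` formed by DMCs
`Q₁,…,Q_L` with `ε_{Q_ℓ} ≥ ε > 0` for all `ℓ` (for every pair of inputs `x, x'` of
`Q_ℓ` there is an output `y` with `Q_ℓ(y|x) ≥ ε` and `Q_ℓ(y|x') ≥ ε`).  Then for every
batch size `M` and inner block-length `N`, the batched-code capacity satisfies
`C_L(M,N) ≤ ((1 - ε^{N(2|𝒬ᵢ|^N + K)})^{⌊L/K⌋} / N) · min{M log|A|, N log|𝒬ₒ|}`,
where `K = ⌈N log₂|𝒬ᵢ|⌉`: every batched code's rate obeys this bound. -/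
theorem stmt11 {A Qi Qo : Type} [Fintype A] [Fintype Qi] [Fintype Qo]
    (L M N : ℕ) (hL : 0 < L) (hM : 0 < M) (hN : 0 < N)
    (ε : ℝ) (hε : 0 < ε)
    (Q : ℕ → Matrix Qi Qo ℝ) (hQ : ∀ ℓ, IsStoch (Q ℓ))
    (hεQ : ∀ (ℓ : ℕ) (x x' : Qi), ∃ y, ε ≤ Q ℓ x y ∧ ε ≤ Q ℓ x' y)
    (F : Matrix (Fin M → A) (Fin N → Qi) ℝ) (hF : IsStoch F)
    (Φ : ℕ → Matrix (Fin N → Qo) (Fin N → Qi) ℝ) (hΦ : ∀ ℓ, IsStoch (Φ ℓ))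
    (p : (Fin M → A) → ℝ) (hp : IsDist p) :
    (1 / (N : ℝ)) * mutualInfo p (endToEnd L M N F Q Φ)
      ≤ ((1 - ε ^ (N * (2 * Fintype.card Qi ^ N +
              ⌈(N : ℝ) * Real.logb 2 (Fintype.card Qi)⌉₊))) ^
            (L / ⌈(N : ℝ) * Real.logb 2 (Fintype.card Qi)⌉₊) / (N : ℝ)) *
          min ((M : ℝ) * Real.logb 2 (Fintype.card A))
              ((N : ℝ) * Real.logb 2 (Fintype.card Qo)) :=
  stmt11_general L M N hN ε hε Q hQ hεQ F hF Φ hΦ p hp
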